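/- Limit of the twisted transfer map for large spacing: let D, d ≥ 1, let Φ be a unital CP map on D×D complex matrices with Kraus operators K : Fin d → Matrix (Fin D) (Fin D) ℂ (∑_a (K a) * (K a)ᴴ = 1), and let Λ be a Hermitian D×D matrix with trace Λ = 1 and ∑_a (K a)ᴴ * Λ * (K a) = Λ. Assume the matrix representation T = ∑_a (K a) ⊗ₖ ((K a).map star) has 1 as a characteristic-polynomial root of multiplicity one and every other root of modulus < 1. Then for every matrix M on (Fin D × Fin D), the twisted iterates (Φ⊗Φ)^(k−1)( (Φ⊗Φ)(M * 𝔰) * 𝔰 ) converge entrywise, as k → ∞, to trace( (Λ ⊗ₖ Λ) * (Φ⊗Φ)(M * 𝔰) * 𝔰 ) • 1; in particular, evaluated at M = 1 the limit is t̂ • 1 with t̂ = trace((Λ ⊗ₖ Λ) * (Φ⊗Φ)(𝔰) * 𝔰). -/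

import Mathlib

/-! The transfer matrix `T` fixes `vec 1` on the right (unitality) and `vec Λ` on the left (the
adjoint fixed point), and `vec Λ ⬝ᵥ vec 1 = trace Λ = 1`, so `P := vecMulVec (vec 1) (vec Λ)` is a
projection commuting with `T`, and `T ^ k = P + (T - P) ^ k` for `k ≥ 1`. Since `1` is a simple
eigenvalue of `T`, every eigenvalue of `T - P` lies in the open unit disc, and Gelfand's formula
gives `(T - P) ^ k → 0`, hence `T ^ k → P`. Up to a reshuffling of indices the transfer matrix of
`Φ ⊗ Φ` is `T ⊗ₖ T`, so its powers converge to `P ⊗ₖ P`, the rank-one projection attached to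
`Λ ⊗ₖ Λ`; read back on matrices this is `X ↦ trace ((Λ ⊗ₖ Λ) * X) • 1`. -/

open Matrix Filter
open scoped Kronecker ENNReal NNReal Topology

/-- The swap matrix on `Fin D × Fin D`. -/
def swapMatrix (D : ℕ) : Matrix (Fin D × Fin D) (Fin D × Fin D) ℂ :=
  fun p q => if p.1 = q.2 ∧ p.2 = q.1 then 1 else 0

/-- The tensor square `Φ ⊗ Φ` of the CP map with Kraus operators `K`. -/
noncomputable def tensorSqCP {D d : ℕ} (K : Fin d → Matrix (Fin D) (Fin D) ℂ)
    (M : Matrix (Fin D × Fin D) (Fin D × Fin D) ℂ) :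
    Matrix (Fin D × Fin D) (Fin D × Fin D) ℂ :=
  ∑ a : Fin d × Fin d, (K a.1 ⊗ₖ K a.2) * M * (K a.1 ⊗ₖ K a.2)ᴴ

/-- The matrix representation `T = ∑ a, K a ⊗ₖ (K a).map star`. -/
noncomputable def transferMatrix {D d : ℕ} (K : Fin d → Matrix (Fin D) (Fin D) ℂ) :
    Matrix (Fin D × Fin D) (Fin D × Fin D) ℂ :=
  ∑ a, K a ⊗ₖ (K a).map star

theorem tendsto_pow_atTop_nhds_zero_of_spectralRadius_lt_one {A : Type*} [NormedRing A]
    [NormedAlgebra ℂ A] [CompleteSpace A] {a : A} (h : spectralRadius ℂ a < 1) :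
    Tendsto (a ^ ·) atTop (𝓝 0) := by
  obtain ⟨r, hρr, hr1⟩ := ENNReal.lt_iff_exists_nnreal_btwn.mp h
  refine squeeze_zero_norm' ?_ (tendsto_pow_atTop_nhds_zero_of_lt_one r.coe_nonneg (mod_cast hr1))
  filter_upwards [(spectrum.pow_nnnorm_pow_one_div_tendsto_nhds_spectralRadius a).eventually
    (gt_mem_nhds hρr), eventually_ge_atTop 1] with n hn hn1
  rw [← ENNReal.coe_rpow_of_nonneg _ (by positivity), ENNReal.coe_lt_coe, one_div,
    NNReal.rpow_inv_lt_iff (by positivity), NNReal.rpow_natCast] at hn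
  exact_mod_cast hn.le

namespace Matrix

variable {n : Type*} [Fintype n] [DecidableEq n]

theorem mem_spectrum_iff_exists_mulVec_eq_smul {K : Type*} [Field K] {A : Matrix n n K} {μ : K} :
    μ ∈ spectrum K A ↔ ∃ x ≠ 0, A *ᵥ x = μ • x := by
  rw [spectrum.mem_iff, isUnit_iff_isUnit_det, isUnit_iff_ne_zero, not_not,
    ← exists_mulVec_eq_zero_iff]
  simp only [Algebra.algebraMap_eq_smul_one, sub_mulVec, smul_mulVec, one_mulVec, sub_eq_zero,
    eq_comm]

theorem mem_span_singleton_of_mulVec_eq_self {K : Type*} [Field K] {A : Matrix n n K}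
    (h1 : A.charpoly.rootMultiplicity 1 = 1) {v x : n → K} (hv : A *ᵥ v = v) (hv0 : v ≠ 0)
    (hx : A *ᵥ x = x) : x ∈ K ∙ v := by
  have hle : (K ∙ v) ≤ Module.End.eigenspace (toLin' A) 1 := by
    rw [Submodule.span_singleton_le_iff_mem, Module.End.mem_eigenspace_iff, one_smul]
    exact hv
  have hrank :
      Module.finrank K (Module.End.eigenspace (toLin' A) 1) ≤ Module.finrank K (K ∙ v) := by
    rw [finrank_span_singleton hv0, ← h1, ← charpoly_toLin']
    exact LinearMap.finrank_eigenspace_le _ _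
  rw [Submodule.eq_of_le_of_finrank_le hle hrank, Module.End.mem_eigenspace_iff, one_smul]
  exact hx

theorem norm_lt_one_of_mem_spectrum_sub_vecMulVec {𝕜 : Type*} [NormedField 𝕜]
    {A : Matrix n n 𝕜} {u v : n → 𝕜} (hv : A *ᵥ v = v) (hu : u ᵥ* A = u)
    (huv : u ⬝ᵥ v = 1) (h1 : A.charpoly.rootMultiplicity 1 = 1)
    (h2 : ∀ z ∈ A.charpoly.roots, z ≠ 1 → ‖z‖ < 1) {μ : 𝕜}
    (hμ : μ ∈ spectrum 𝕜 (A - vecMulVec v u)) : ‖μ‖ < 1 := by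
  obtain ⟨x, hx0, hx⟩ := mem_spectrum_iff_exists_mulVec_eq_smul.mp hμ
  have hBx : A *ᵥ x - (u ⬝ᵥ x) • v = μ • x := by
    rw [← hx, sub_mulVec, vecMulVec_mulVec, op_smul_eq_smul]
  have hux : μ * (u ⬝ᵥ x) = 0 := by
    have := congrArg (u ⬝ᵥ ·) hBx
    simp only [dotProduct_sub, dotProduct_smul, dotProduct_mulVec, hu, huv, smul_eq_mul,
      mul_one, sub_self] at this
    exact this.symm
  rcases mul_eq_zero.mp hux with rfl | hxu
  · simp
  rw [hxu, zero_smul, sub_zero] at hBx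
  by_cases hμ1 : μ = 1
  · subst hμ1
    have hv0 : v ≠ 0 := by rintro rfl; simp at huv
    rw [one_smul] at hBx
    obtain ⟨c, rfl⟩ := Submodule.mem_span_singleton.mp
      (mem_span_singleton_of_mulVec_eq_self h1 hv hv0 hBx)
    simp only [dotProduct_smul, huv, smul_eq_mul, mul_one] at hxu
    simp [hxu] at hx0
  · refine h2 μ ?_ hμ1
    rw [Polynomial.mem_roots (charpoly_monic A).ne_zero, ← mem_spectrum_iff_isRoot_charpoly]
    exact mem_spectrum_iff_exists_mulVec_eq_smul.mpr ⟨x, hx0, hBx⟩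

-- Gelfand's formula needs a Banach algebra norm; any one induces the usual topology on matrices.
attribute [local instance] Matrix.linftyOpNormedRing Matrix.linftyOpNormedAlgebra in
theorem tendsto_pow_atTop_vecMulVec {A : Matrix n n ℂ} {u v : n → ℂ} (hv : A *ᵥ v = v) (hu : u ᵥ* A = u)
    (huv : u ⬝ᵥ v = 1) (h1 : A.charpoly.rootMultiplicity 1 = 1)
    (h2 : ∀ z ∈ A.charpoly.roots, z ≠ 1 → ‖z‖ < 1) :
    Tendsto (A ^ ·) atTop (𝓝 (vecMulVec v u)) := by
  set P := vecMulVec v u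
  -- so that the matrix algebra is nontrivial and the spectrum of `A - P` is nonempty
  have : Nonempty n := by
    by_contra h
    simp [not_nonempty_iff.mp h] at huv
  have hAP : ∀ k : ℕ, A ^ k * P = P := by
    intro k
    induction k with
    | zero => rw [pow_zero, one_mul]
    | succ k ih => rw [pow_succ, mul_assoc, mul_vecMulVec, hv, ih]
  have hPA : P * A = P := by rw [vecMulVec_mul, hu]
  have hPP : P * P = P := by rw [vecMulVec_mul_vecMulVec, huv, one_smul]
  have hpow : ∀ k : ℕ, (A - P) ^ (k + 1) = A ^ (k + 1) - P := by
    intro k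
    induction k with
    | zero => simp
    | succ k ih => rw [pow_succ, ih, sub_mul, mul_sub, mul_sub, ← pow_succ, hAP, hPA, hPP]; abel
  have hdecay : Tendsto ((A - P) ^ ·) atTop (𝓝 0) :=
    tendsto_pow_atTop_nhds_zero_of_spectralRadius_lt_one <| by
      simpa using spectrum.spectralRadius_lt_of_forall_lt (A - P) (r := 1) fun z hz =>
        (mod_cast norm_lt_one_of_mem_spectrum_sub_vecMulVec hv hu huv h1 h2 hz : ‖z‖₊ < 1)
  rw [← tendsto_add_atTop_iff_nat 1]
  simpa [hpow] using (hdecay.comp (tendsto_add_atTop_nat 1)).const_add P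

end Matrix

theorem Filter.Tendsto.matrix_kronecker {α R l m p q : Type*} [Mul R] [TopologicalSpace R]
    [ContinuousMul R] {F : Filter α} {f : α → Matrix l m R} {g : α → Matrix p q R}
    {A : Matrix l m R} {B : Matrix p q R} (hf : Tendsto f F (𝓝 A)) (hg : Tendsto g F (𝓝 B)) :
    Tendsto (fun x => f x ⊗ₖ g x) F (𝓝 (A ⊗ₖ B)) :=
  tendsto_pi_nhds.2 fun i => tendsto_pi_nhds.2 fun j =>
    ((hf.apply_nhds i.1).apply_nhds j.1).mul ((hg.apply_nhds i.2).apply_nhds j.2)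

theorem Matrix.submatrix_kronecker_pow {R n m p : Type*} [CommSemiring R] [Fintype n]
    [Fintype m] [Fintype p] [DecidableEq n] [DecidableEq m] [DecidableEq p]
    (A : Matrix n n R) (B : Matrix m m R) (e : p ≃ n × m) (k : ℕ) :
    ((A ⊗ₖ B).submatrix e e) ^ k = ((A ^ k) ⊗ₖ (B ^ k)).submatrix e e := by
  induction k with
  | zero => rw [pow_zero, pow_zero, pow_zero, one_kronecker_one, submatrix_one_equiv]
  | succ k ih =>
    rw [pow_succ, ih, submatrix_mul_equiv, ← mul_kronecker_mul, ← pow_succ, ← pow_succ]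

section Kraus

variable {ι κ n m : Type*} [Fintype ι] [Fintype κ]

def krausMap [Fintype n] (K : ι → Matrix n n ℂ) (X : Matrix n n ℂ) : Matrix n n ℂ :=
  ∑ a, K a * X * (K a)ᴴ

def krausTransfer (K : ι → Matrix n n ℂ) : Matrix (n × n) (n × n) ℂ :=
  ∑ a, K a ⊗ₖ (K a).map star

-- `vec Xᵀ` is the row-major vectorisation `(i, j) ↦ X i j`, the one on which `krausTransfer` acts.
theorem krausTransfer_mulVec_vec_transpose [Fintype n] (K : ι → Matrix n n ℂ)
    (X : Matrix n n ℂ) :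
    krausTransfer K *ᵥ vec Xᵀ = vec (krausMap K X)ᵀ := by
  simp only [krausTransfer, krausMap, sum_mulVec, kronecker_mulVec_vec, transpose_sum,
    transpose_mul, vec_sum, Matrix.mul_assoc]
  rfl

theorem vec_transpose_krausMap_iterate [Fintype n] [DecidableEq n] (K : ι → Matrix n n ℂ)
    (X : Matrix n n ℂ) (k : ℕ) :
    vec ((krausMap K)^[k] X)ᵀ = krausTransfer K ^ k *ᵥ vec Xᵀ := by
  induction k with
  | zero => simp
  | succ k ih =>
    rw [Function.iterate_succ_apply', ← krausTransfer_mulVec_vec_transpose, ih, mulVec_mulVec,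
      ← pow_succ']

theorem vec_vecMul_krausTransfer [Fintype n] (K : ι → Matrix n n ℂ) (Λ : Matrix n n ℂ) :
    vec Λ ᵥ* krausTransfer K = vec (∑ a, (K a)ᴴ * Λ * K a) := by
  simp only [krausTransfer, vecMul_sum, vec_vecMul_kronecker, vec_sum]
  rfl

theorem krausTransfer_kronecker (K : ι → Matrix n n ℂ) (L : κ → Matrix m m ℂ) :
    krausTransfer (fun a : ι × κ => K a.1 ⊗ₖ L a.2) =
      (krausTransfer K ⊗ₖ krausTransfer L).submatrix (Equiv.prodProdProdComm n m n m)
        (Equiv.prodProdProdComm n m n m) := by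
  ext x y
  simp only [krausTransfer, Matrix.sum_apply, submatrix_apply, kroneckerMap_apply, map_apply,
    Equiv.prodProdProdComm_apply, Fintype.sum_prod_type, Finset.sum_mul_sum, star_mul']
  refine Finset.sum_congr rfl fun a _ => Finset.sum_congr rfl fun b _ => ?_
  ring

theorem vecMulVec_vec_one_kronecker [DecidableEq n] [DecidableEq m] (Λ : Matrix n n ℂ)
    (Λ' : Matrix m m ℂ) :
    (vecMulVec (vec 1) (vec Λ) ⊗ₖ vecMulVec (vec 1) (vec Λ')).submatrix
        (Equiv.prodProdProdComm n m n m) (Equiv.prodProdProdComm n m n m) =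
      vecMulVec (vec 1) (vec (Λ ⊗ₖ Λ')) := by
  ext x y
  rw [← one_kronecker_one]
  simp only [submatrix_apply, kroneckerMap_apply, vecMulVec_apply, vec,
    Equiv.prodProdProdComm_apply]
  ring

theorem tendsto_pow_krausTransfer_kronecker [Fintype n] [Fintype m] [DecidableEq n]
    [DecidableEq m] {K : ι → Matrix n n ℂ} {L : κ → Matrix m m ℂ} {Λ : Matrix n n ℂ}
    {Λ' : Matrix m m ℂ}
    (hK : Tendsto (krausTransfer K ^ ·) atTop (𝓝 (vecMulVec (vec 1) (vec Λ))))
    (hL : Tendsto (krausTransfer L ^ ·) atTop (𝓝 (vecMulVec (vec 1) (vec Λ')))) :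
    Tendsto (krausTransfer (fun a : ι × κ => K a.1 ⊗ₖ L a.2) ^ ·) atTop
      (𝓝 (vecMulVec (vec 1) (vec (Λ ⊗ₖ Λ')))) := by
  simp only [krausTransfer_kronecker, submatrix_kronecker_pow, ← vecMulVec_vec_one_kronecker]
  exact ((continuous_id.matrix_submatrix _ _).tendsto _).comp (hK.matrix_kronecker hL)

theorem tendsto_krausMap_iterate [Fintype n] [DecidableEq n] {K : ι → Matrix n n ℂ}
    {Λ : Matrix n n ℂ} (hK : Tendsto (krausTransfer K ^ ·) atTop (𝓝 (vecMulVec (vec 1) (vec Λ))))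
    (X : Matrix n n ℂ) :
    Tendsto (fun k => (krausMap K)^[k] X) atTop (𝓝 ((Λ * X).trace • 1)) := by
  have hvec : Tendsto (fun k => vec ((krausMap K)^[k] X)ᵀ) atTop
      (𝓝 (vec ((Λ * X).trace • (1 : Matrix n n ℂ))ᵀ)) := by
    have hlim :
        vecMulVec (vec 1) (vec Λ) *ᵥ vec Xᵀ = vec ((Λ * X).trace • (1 : Matrix n n ℂ))ᵀ := by
      rw [vecMulVec_mulVec, op_smul_eq_smul, vec_dotProduct_vec, ← transpose_mul, trace_transpose,
        trace_mul_comm, transpose_smul, transpose_one, vec_smul]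
    simp only [vec_transpose_krausMap_iterate, ← hlim]
    exact ((continuous_id.matrix_mulVec continuous_const).tendsto _).comp hK
  exact tendsto_pi_nhds.2 fun i => tendsto_pi_nhds.2 fun j => hvec.apply_nhds (i, j)

theorem tendsto_pow_krausTransfer [Fintype n] [DecidableEq n] {K : ι → Matrix n n ℂ}
    {Λ : Matrix n n ℂ} (hunital : ∑ a, K a * (K a)ᴴ = 1) (hΛtr : Λ.trace = 1)
    (hfix : ∑ a, (K a)ᴴ * Λ * K a = Λ)
    (h1 : (krausTransfer K).charpoly.rootMultiplicity 1 = 1)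
    (h2 : ∀ z ∈ (krausTransfer K).charpoly.roots, z ≠ 1 → ‖z‖ < 1) :
    Tendsto (krausTransfer K ^ ·) atTop (𝓝 (vecMulVec (vec 1) (vec Λ))) := by
  refine tendsto_pow_atTop_vecMulVec ?_ ?_ ?_ h1 h2
  · simpa [krausMap, hunital] using krausTransfer_mulVec_vec_transpose K 1
  · rw [vec_vecMul_krausTransfer, hfix]
  · rw [vec_dotProduct_vec, Matrix.mul_one, trace_transpose, hΛtr]

end Kraus

theorem twisted_iterates_tendsto_general
    (D d : ℕ)
    (K : Fin d → Matrix (Fin D) (Fin D) ℂ)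
    (hunital : ∑ a, K a * (K a)ᴴ = (1 : Matrix (Fin D) (Fin D) ℂ))
    (Λ : Matrix (Fin D) (Fin D) ℂ) (hΛtr : Λ.trace = 1)
    (hfix : ∑ a, (K a)ᴴ * Λ * K a = Λ)
    (h1 : Polynomial.rootMultiplicity 1 (transferMatrix K).charpoly = 1)
    (h2 : ∀ z ∈ (transferMatrix K).charpoly.roots, z ≠ 1 → ‖z‖ < 1) :
    (∀ M : Matrix (Fin D × Fin D) (Fin D × Fin D) ℂ, ∀ i j : Fin D × Fin D,
      Tendsto (fun k : ℕ =>
          ((tensorSqCP K)^[k - 1] (tensorSqCP K (M * swapMatrix D) * swapMatrix D)) i j)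
        atTop
        (nhds ((((Λ ⊗ₖ Λ) * (tensorSqCP K (M * swapMatrix D) * swapMatrix D)).trace •
          (1 : Matrix (Fin D × Fin D) (Fin D × Fin D) ℂ)) i j))) ∧
    (∀ i j : Fin D × Fin D,
      Tendsto (fun k : ℕ =>
          ((tensorSqCP K)^[k - 1] (tensorSqCP K (swapMatrix D) * swapMatrix D)) i j)
        atTop
        (nhds ((((Λ ⊗ₖ Λ) * tensorSqCP K (swapMatrix D) * swapMatrix D).trace •
          (1 : Matrix (Fin D × Fin D) (Fin D × Fin D) ℂ)) i j))) := by
  -- `transferMatrix K` is `krausTransfer K`, and `tensorSqCP K` is `krausMap` of the family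
  -- `fun a => K a.1 ⊗ₖ K a.2`, both by definition.
  have hT : Tendsto (krausTransfer K ^ ·) atTop (𝓝 (vecMulVec (vec 1) (vec Λ))) :=
    tendsto_pow_krausTransfer hunital hΛtr hfix h1 h2
  have hlim : ∀ X, Tendsto (fun k => (tensorSqCP K)^[k] X) atTop
      (𝓝 (((Λ ⊗ₖ Λ) * X).trace • 1)) :=
    tendsto_krausMap_iterate (tendsto_pow_krausTransfer_kronecker hT hT)
  have hM : ∀ X i j, Tendsto (fun k => (tensorSqCP K)^[k - 1] X i j) atTop
      (𝓝 ((((Λ ⊗ₖ Λ) * X).trace • (1 : Matrix (Fin D × Fin D) (Fin D × Fin D) ℂ)) i j)) :=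
    fun X i j => (((hlim X).comp (tendsto_sub_atTop_nat 1)).apply_nhds i).apply_nhds j
  refine ⟨fun M => hM _, fun i j => ?_⟩
  simpa only [Matrix.mul_assoc] using hM (tensorSqCP K (swapMatrix D) * swapMatrix D) i j

/-- Limit of the twisted transfer map for large spacing: for a unital CP map `Φ` with gapped,
normalized matrix representation and Hermitian adjoint fixed point `Λ` of unit trace, the
twisted iterates `(Φ⊗Φ)^(k-1)((Φ⊗Φ)(M * 𝔰) * 𝔰)` converge entrywise to
`trace ((Λ ⊗ₖ Λ) * (Φ⊗Φ)(M * 𝔰) * 𝔰) • 1`; in particular at `M = 1` the limit is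
`trace ((Λ ⊗ₖ Λ) * (Φ⊗Φ)(𝔰) * 𝔰) • 1`. -/
theorem twisted_iterates_tendsto
    (D d : ℕ) (hD : 1 ≤ D) (hd : 1 ≤ d)
    (K : Fin d → Matrix (Fin D) (Fin D) ℂ)
    (hunital : ∑ a, K a * (K a)ᴴ = (1 : Matrix (Fin D) (Fin D) ℂ))
    (Λ : Matrix (Fin D) (Fin D) ℂ) (hherm : Λᴴ = Λ) (hΛtr : Λ.trace = 1)
    (hfix : ∑ a, (K a)ᴴ * Λ * K a = Λ)
    (h1 : Polynomial.rootMultiplicity 1 (transferMatrix K).charpoly = 1)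
    (h2 : ∀ z ∈ (transferMatrix K).charpoly.roots, z ≠ 1 → ‖z‖ < 1) :
    (∀ M : Matrix (Fin D × Fin D) (Fin D × Fin D) ℂ, ∀ i j : Fin D × Fin D,
      Tendsto (fun k : ℕ =>
          ((tensorSqCP K)^[k - 1] (tensorSqCP K (M * swapMatrix D) * swapMatrix D)) i j)
        atTop
        (nhds ((((Λ ⊗ₖ Λ) * (tensorSqCP K (M * swapMatrix D) * swapMatrix D)).trace •
          (1 : Matrix (Fin D × Fin D) (Fin D × Fin D) ℂ)) i j))) ∧
    (∀ i j : Fin D × Fin D,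
      Tendsto (fun k : ℕ =>
          ((tensorSqCP K)^[k - 1] (tensorSqCP K (swapMatrix D) * swapMatrix D)) i j)
        atTop
        (nhds ((((Λ ⊗ₖ Λ) * tensorSqCP K (swapMatrix D) * swapMatrix D).trace •
          (1 : Matrix (Fin D × Fin D) (Fin D × Fin D) ℂ)) i j))) :=
  twisted_iterates_tendsto_general D d K hunital Λ hΛtr hfix h1 h2
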